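/- arXiv:2308.00054 — 2 statements merged into one kernel-verified Lean document; each statement's English description precedes it below -/
import Mathlib

section
/- Let T be a finite tree and let v be a vertex of T adjacent to two distinct leaves u and w. Then \u03b3^\u221e_{all,2}(T) = \u03b3^\u221e_{all,2}(T - u). -/
/-!
Two leaves `u`, `w` on a common vertex are false twins. Sending `u` to `w` is a surjective
homomorphism `G → G - u` which preserves and reflects being within distance `k ≥ 2`: a walk
out of `w` leaves `u` just as well through the same first neighbour, and `u`, `w` are at
distance 2. Hence eternal defence families transfer both ways: push configurations forward,
and pull them back along a section of the collapse, except that the guard answering an attack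
on `u` is placed on `u` itself.
-/

open SimpleGraph

universe u v

namespace EternalDom

variable {V : Type u} {W : Type v}

/-- `x` is within distance `k` of `y` in `G` (in particular, a path between them exists). -/
def WithinDist (G : SimpleGraph V) (k : ℕ) (x y : V) : Prop :=
  G.Reachable x y ∧ G.dist x y ≤ k

/-- A multiset of guards is distance-`k` dominating: every vertex is within
distance `k` of some guard. -/
def IsDistKDomMultiset (G : SimpleGraph V) (k : ℕ) (D : Multiset V) : Prop :=
  ∀ w : V, ∃ x ∈ D, WithinDist G k x w

/-- `F` is an eternal distance-`k` defence family of guard configurations of size `m`: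
a nonempty family of distance-`k` dominating multisets, all of cardinality `m`, such that
for every configuration `D ∈ F` and every attacked vertex `w` there is a configuration
`D' ∈ F` containing `w` that is obtained from `D` by a matching (bijection) moving each
guard a distance of at most `k`. -/
def IsEternalFamily (G : SimpleGraph V) (k m : ℕ) (F : Set (Multiset V)) : Prop :=
  F.Nonempty ∧
    (∀ D ∈ F, Multiset.card D = m ∧ IsDistKDomMultiset G k D) ∧
    (∀ D ∈ F, ∀ w : V, ∃ D' ∈ F, w ∈ D' ∧ Multiset.Rel (WithinDist G k) D D')

/-- The eternal distance-`k` domination number `γ^∞_{all,k}(G)`. -/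
noncomputable def eternalNum (G : SimpleGraph V) (k : ℕ) : ℕ :=
  sInf {m | ∃ F : Set (Multiset V), IsEternalFamily G k m F}

/-- `x` dominates `w`: they are equal or adjacent. -/
def Dominates (G : SimpleGraph V) (x w : V) : Prop := w = x ∨ G.Adj x w

/-- A dominating set of vertices. -/
def IsDomSet (G : SimpleGraph V) (D : Set V) : Prop := ∀ w : V, ∃ x ∈ D, Dominates G x w

/-- The domination number `γ(G)`. -/
noncomputable def domNum (G : SimpleGraph V) : ℕ :=
  sInf {n | ∃ D : Set V, IsDomSet G D ∧ D.ncard = n}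

/-- A distance-`k` dominating set of vertices. -/
def IsDistKDomSet (G : SimpleGraph V) (k : ℕ) (D : Set V) : Prop :=
  ∀ w : V, ∃ x ∈ D, WithinDist G k x w

/-- The distance-`k` domination number `γ_k(G)`. -/
noncomputable def distDomNum (G : SimpleGraph V) (k : ℕ) : ℕ :=
  sInf {n | ∃ D : Set V, IsDistKDomSet G k D ∧ D.ncard = n}

/-- A leaf: a vertex of degree 1, i.e. with a unique neighbour. -/
def IsLeafV (G : SimpleGraph V) (x : V) : Prop := ∃! y, G.Adj x y

/-- A stem: a vertex adjacent to at least one leaf. -/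
def IsStem (G : SimpleGraph V) (x : V) : Prop := ∃ y, G.Adj x y ∧ IsLeafV G y

/-- `k`-leaves: a `0`-leaf is a leaf; for `k > 0`, `v` is a `k`-leaf iff `v` is adjacent to
some `(k-1)`-leaf and all but at most one of the neighbours of `v` are `t`-leaves for some
`t < k`. -/
def IsKLeaf (G : SimpleGraph V) : ℕ → V → Prop
  | 0, v => IsLeafV G v
  | (k + 1), v =>
      (∃ u, G.Adj v u ∧ IsKLeaf G k u) ∧
        ∃ w : V, ∀ x : V, G.Adj v x → x ≠ w → ∃ t, ∃ _ : t ≤ k, IsKLeaf G t x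
  termination_by k _ => k
  decreasing_by all_goals omega

/-- For a 2-leaf `v`, the set `L(v)`: the union of `L[u]` over all neighbours `u` of `v`
which are 0-leaves or 1-leaves, where for a 1-leaf `u`, `L[u]` consists of `u` and the leaves
adjacent to `u`. -/
def Lopen (G : SimpleGraph V) (v : V) : Set V :=
  {x | ∃ u, G.Adj v u ∧
    ((IsKLeaf G 0 u ∧ x = u) ∨
      (IsKLeaf G 1 u ∧ (x = u ∨ (G.Adj u x ∧ IsKLeaf G 0 x))))}

/-- For a 2-leaf `v`, the set `L[v] = L(v) ∪ {v}`. -/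
def Lclosed (G : SimpleGraph V) (v : V) : Set V := insert v (Lopen G v)

/-- A graph is eternal distance-2 domination critical if deleting any non-cut vertex
(one whose removal leaves the graph connected) strictly decreases the eternal
distance-2 domination number. -/
def EternalCritical (G : SimpleGraph V) : Prop :=
  ∀ x : V, (G.induce {y | y ≠ x}).Connected →
    eternalNum (G.induce {y | y ≠ x}) 2 < eternalNum G 2

/-- Attach a pendant path `x₁ x₂ … xₙ` on `n` new vertices to the vertex `y`,
via the edge `y x₁`. -/
def attachPath (G : SimpleGraph V) (y : V) (n : ℕ) : SimpleGraph (V ⊕ Fin n) :=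
  G.map Sum.inl ⊔ (pathGraph n).map Sum.inr ⊔
    fromEdgeSet {e | ∃ h : 0 < n, e = s(Sum.inl y, Sum.inr ⟨0, h⟩)}

/-- The star `K_{1,m}`: centre `0`, leaves the `m` nonzero elements of `Fin (m+1)`. -/
def starGraph (m : ℕ) : SimpleGraph (Fin (m + 1)) where
  Adj x y := (x = 0 ∧ y ≠ 0) ∨ (y = 0 ∧ x ≠ 0)
  symm := ⟨by tauto⟩
  loopless := ⟨by rintro x (⟨h1, h2⟩ | ⟨h1, h2⟩) <;> exact h2 h1⟩

/-- Disjoint union of `G` and the star `K_{1,m}` together with one edge joining the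
vertex `a` of the star to the vertex `y` of `G`. -/
def attachStar (G : SimpleGraph V) (y : V) (m : ℕ) (a : Fin (m + 1)) :
    SimpleGraph (V ⊕ Fin (m + 1)) :=
  G.map Sum.inl ⊔ (starGraph m).map Sum.inr ⊔
    fromEdgeSet {s(Sum.inl y, Sum.inr a)}

/-- From `G` and a vertex `v`: add a new star `K_{1,m}` joined by an edge from its centre
to `v`, together with `t` new leaves adjacent to `v`. -/
def addStarAndLeaves (G : SimpleGraph V) (v : V) (m t : ℕ) :
    SimpleGraph (V ⊕ (Fin (m + 1) ⊕ Fin t)) :=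
  G.map Sum.inl ⊔
    (starGraph m).map (Sum.inr ∘ Sum.inl) ⊔
    fromEdgeSet ({s(Sum.inl v, Sum.inr (Sum.inl 0))} ∪
      {e | ∃ i : Fin t, e = s(Sum.inl v, Sum.inr (Sum.inr i))})

/-- From `G` and a vertex `v`: add two new stars `K_{1,m}` and `K_{1,M}`, joining the
centre of each new star to `v` by an edge. -/
def addTwoStars (G : SimpleGraph V) (v : V) (m M : ℕ) :
    SimpleGraph (V ⊕ (Fin (m + 1) ⊕ Fin (M + 1))) :=
  G.map Sum.inl ⊔
    (starGraph m).map (Sum.inr ∘ Sum.inl) ⊔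
    (starGraph M).map (Sum.inr ∘ Sum.inr) ⊔
    fromEdgeSet {s(Sum.inl v, Sum.inr (Sum.inl 0)), s(Sum.inl v, Sum.inr (Sum.inr 0))}

/-- The 1-sum of `G` and `H` at the vertex `u` of `G` and the vertex `w` of `H`:
the disjoint union of `G` and `H` with `u` and `w` identified. -/
def oneSum (G : SimpleGraph V) (H : SimpleGraph W) (u : V) (w : W) :
    SimpleGraph (V ⊕ {x : W // x ≠ w}) where
  Adj x y :=
    match x, y with
    | Sum.inl a, Sum.inl b => G.Adj a b
    | Sum.inr a, Sum.inr b => H.Adj a.1 b.1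
    | Sum.inl a, Sum.inr b => a = u ∧ H.Adj w b.1
    | Sum.inr a, Sum.inl b => b = u ∧ H.Adj w a.1
  symm := ⟨by
    rintro (a | a) (b | b) h
    · exact h.symm
    · exact h
    · exact h
    · exact h.symm⟩
  loopless := ⟨by
    rintro (a | a) h
    · exact G.loopless.irrefl a h
    · exact H.loopless.irrefl a.1 h⟩

section

variable {G : SimpleGraph V} {H : SimpleGraph W} {k m : ℕ}

theorem WithinDist.symm {x y : V} (h : WithinDist G k x y) : WithinDist G k y x :=
  ⟨h.1.symm, G.dist_comm ▸ h.2⟩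

theorem WithinDist.map (f : G →g H) {x y : V} (h : WithinDist G k x y) :
    WithinDist H k (f x) (f y) := by
  obtain ⟨p, hp⟩ := h.1.exists_walk_length_eq_dist
  refine ⟨h.1.map f, ?_⟩
  calc H.dist (f x) (f y) ≤ (p.map f).length := dist_le _
    _ = G.dist x y := by rw [Walk.length_map, hp]
    _ ≤ k := h.2

theorem WithinDist.of_neighborSet_eq {u w v x : V} (htw : G.neighborSet u = G.neighborSet w)
    (hv : G.Adj v w) (hk : 2 ≤ k) (h : WithinDist G k w x) : WithinDist G k u x := by
  obtain ⟨p, hp⟩ := h.1.exists_walk_length_eq_dist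
  cases p with
  | nil =>
    have huv : G.Adj u v := by rw [← mem_neighborSet, htw, mem_neighborSet]; exact hv.symm
    let q := huv.toWalk.append hv.toWalk
    exact ⟨q.reachable, (dist_le q).trans (by simpa [q] using hk)⟩
  | @cons _ y _ hwy p =>
    have huy : G.Adj u y := by rw [← mem_neighborSet, htw, mem_neighborSet]; exact hwy
    let q := Walk.cons huy p
    exact ⟨q.reachable, (dist_le q).trans (le_of_eq_of_le hp h.2)⟩

theorem IsEternalFamily.image {F : Set (Multiset V)} (hF : IsEternalFamily G k m F)
    {ρ : V → W} (hρ : Function.Surjective ρ)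
    (hmap : ∀ a x, WithinDist G k a x → WithinDist H k (ρ a) (ρ x)) :
    IsEternalFamily H k m (Multiset.map ρ '' F) := by
  obtain ⟨hne, hdom, hdef⟩ := hF
  refine ⟨hne.image _, ?_, ?_⟩
  · rintro _ ⟨D, hD, rfl⟩
    refine ⟨by rw [Multiset.card_map, (hdom D hD).1], fun b => ?_⟩
    obtain ⟨x, rfl⟩ := hρ b
    obtain ⟨g, hg, hgx⟩ := (hdom D hD).2 x
    exact ⟨ρ g, Multiset.mem_map_of_mem ρ hg, hmap g x hgx⟩
  · rintro _ ⟨D, hD, rfl⟩ b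
    obtain ⟨x, rfl⟩ := hρ b
    obtain ⟨E, hE, hxE, hrel⟩ := hdef D hD x
    exact ⟨E.map ρ, ⟨E, hE, rfl⟩, Multiset.mem_map_of_mem ρ hxE,
      Multiset.rel_map.2 (hrel.mono fun a _ x _ => hmap a x)⟩

theorem IsEternalFamily.preimage {F : Set (Multiset W)} (hF : IsEternalFamily H k m F)
    {ρ : V → W} (hρ : Function.Surjective ρ)
    (hcomap : ∀ a x, WithinDist H k (ρ a) (ρ x) → WithinDist G k a x) :
    IsEternalFamily G k m (Multiset.map ρ ⁻¹' F) := by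
  obtain ⟨hne, hdom, hdef⟩ := hF
  set σ := Function.surjInv hρ
  have hlift : ∀ E : Multiset W, (E.map σ).map ρ = E := fun E => by
    rw [Multiset.map_map, (Function.rightInverse_surjInv hρ).comp_eq_id, Multiset.map_id]
  have hcomap' : ∀ a b, WithinDist H k (ρ a) b → WithinDist G k a (σ b) := fun a b h =>
    hcomap a _ (by rwa [Function.surjInv_eq hρ])
  refine ⟨?_, fun D hD => ⟨?_, fun x => ?_⟩, fun D hD x => ?_⟩
  · obtain ⟨E, hE⟩ := hne
    exact ⟨E.map σ, by rwa [Set.mem_preimage, hlift]⟩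
  · rw [← Multiset.card_map ρ, (hdom _ hD).1]
  · obtain ⟨_, hb, hbx⟩ := (hdom _ hD).2 (ρ x)
    obtain ⟨g, hg, rfl⟩ := Multiset.mem_map.1 hb
    exact ⟨g, hg, hcomap g x hbx⟩
  · obtain ⟨E, hE, hxE, hrel⟩ := hdef _ hD (ρ x)
    obtain ⟨T, rfl⟩ := Multiset.exists_cons_of_mem hxE
    obtain ⟨a, D₀, hax, hrest, rfl⟩ :=
      Multiset.rel_cons_right.1 (Multiset.rel_map_left.1 hrel)
    refine ⟨x ::ₘ T.map σ, ?_, Multiset.mem_cons_self _ _, .cons ?_ ?_⟩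
    · rwa [Set.mem_preimage, Multiset.map_cons, hlift]
    · exact hcomap a x hax
    · exact Multiset.rel_map_right.2 (hrest.mono fun a _ b _ => hcomap' a b)

theorem eternalNum_eq_of_surjective {ρ : V → W} (hρ : Function.Surjective ρ)
    (hdist : ∀ a x, WithinDist H k (ρ a) (ρ x) ↔ WithinDist G k a x) :
    eternalNum G k = eternalNum H k := by
  unfold eternalNum
  congr 1
  ext m
  exact ⟨fun ⟨F, hF⟩ => ⟨_, hF.image hρ fun a x => (hdist a x).2⟩,
    fun ⟨F, hF⟩ => ⟨_, hF.preimage hρ fun a x => (hdist a x).1⟩⟩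

theorem IsLeafV.neighborSet_eq {u v : V} (hul : IsLeafV G u) (hu : G.Adj v u) :
    G.neighborSet u = {v} := by
  ext x
  exact ⟨fun hx => hul.unique hx hu.symm, fun hx => hx ▸ hu.symm⟩

section Twins

variable {u w : V}

open Classical in
noncomputable def collapseTwin (huw : u ≠ w) (htw : G.neighborSet u = G.neighborSet w) :
    G →g G.induce {x | x ≠ u} where
  toFun x := ⟨if x = u then w else x, by split_ifs with hx; exacts [huw.symm, hx]⟩
  map_rel' {a b} hab := by
    have hw : ∀ {x}, G.Adj u x → G.Adj w x := fun hx => by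
      rwa [← mem_neighborSet, ← htw, mem_neighborSet]
    simp only [comap_adj, Function.Embedding.coe_subtype]
    split_ifs with ha hb hb
    · exact absurd (ha.trans hb.symm ▸ hab) (G.loopless.irrefl a)
    · exact hw (ha ▸ hab)
    · exact (hw (hb ▸ hab.symm)).symm
    · exact hab

theorem collapseTwin_surjective (huw : u ≠ w) (htw : G.neighborSet u = G.neighborSet w) :
    Function.Surjective (collapseTwin huw htw) :=
  fun b => ⟨b.1, Subtype.ext (if_neg b.2)⟩

theorem withinDist_collapseTwin_iff (huw : u ≠ w) (htw : G.neighborSet u = G.neighborSet w)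
    {v : V} (hv : G.Adj v w) (hk : 2 ≤ k) (a x : V) :
    WithinDist (G.induce {x | x ≠ u}) k (collapseTwin huw htw a) (collapseTwin huw htw x) ↔
      WithinDist G k a x := by
  classical
  refine ⟨fun h => ?_, (·.map _)⟩
  have hdrop : ∀ y z, WithinDist G k (if y = u then w else y) z → WithinDist G k y z := by
    intro y z h
    split_ifs at h with hy
    · exact hy ▸ h.of_neighborSet_eq htw hv hk
    · exact h
  exact hdrop a x (hdrop x _ (h.map (Embedding.induce _).toHom).symm).symm

theorem eternalNum_induce_ne_of_neighborSet_eq (huw : u ≠ w)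
    (htw : G.neighborSet u = G.neighborSet w) {v : V} (hv : G.Adj v w) (hk : 2 ≤ k) :
    eternalNum G k = eternalNum (G.induce {x | x ≠ u}) k :=
  eternalNum_eq_of_surjective (collapseTwin_surjective huw htw)
    (withinDist_collapseTwin_iff huw htw hv hk)

end Twins

end

theorem delete_twin_leaf_general {V : Type u} (G : SimpleGraph V)
    (v u w : V) (huw : u ≠ w) (hu : G.Adj v u) (hul : IsLeafV G u)
    (hw : G.Adj v w) (hwl : IsLeafV G w) :
    eternalNum G 2 = eternalNum (G.induce {x | x ≠ u}) 2 :=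
  eternalNum_induce_ne_of_neighborSet_eq huw
    (by rw [hul.neighborSet_eq hu, hwl.neighborSet_eq hw]) hw le_rfl

/-- deleting one of two leaves sharing a common neighbour does not change the
eternal distance-2 domination number of a tree. -/
theorem delete_twin_leaf {V : Type u} [Fintype V] (G : SimpleGraph V) (hG : G.IsTree)
    (v u w : V) (huw : u ≠ w) (hu : G.Adj v u) (hul : IsLeafV G u)
    (hw : G.Adj v w) (hwl : IsLeafV G w) :
    eternalNum G 2 = eternalNum (G.induce {x | x ≠ u}) 2 :=
  delete_twin_leaf_general G v u w huw hu hul hw hwl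

end EternalDom
end

section
/- Let T' be a finite tree, let m \u2265 2, and let T be the tree formed from the disjoint union of T' and a star K_{1,m} by adding one edge from a leaf of the star to a vertex of T'. Then \u03b3(T) = \u03b3(T') + 1. -/
open SimpleGraph

universe u v

namespace EternalDom

variable {V : Type u} {W : Type v}

/-! A dominating set of `G` together with the centre of the star dominates the new graph.
Conversely, a dominating set `D` of the new graph contains a star vertex `c` other than the
attaching leaf `a`: since `m ≥ 2` there is a second leaf, which only itself and the centre
dominate. As `c` has no neighbour in `G`, sending every star vertex of `D \ {c}` to `y` yields a
dominating set of `G` with at most `|D| - 1` elements. -/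

theorem isDomSet_univ (G : SimpleGraph V) : IsDomSet G Set.univ :=
  fun w => ⟨w, Set.mem_univ w, Or.inl rfl⟩

theorem domNum_le_ncard {G : SimpleGraph V} {D : Set V} (hD : IsDomSet G D) :
    domNum G ≤ D.ncard :=
  Nat.sInf_le ⟨D, hD, rfl⟩

theorem exists_isDomSet_ncard_eq_domNum (G : SimpleGraph V) :
    ∃ D, IsDomSet G D ∧ D.ncard = domNum G :=
  Nat.sInf_mem (s := {n | ∃ D, IsDomSet G D ∧ D.ncard = n}) ⟨_, Set.univ, isDomSet_univ G, rfl⟩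

theorem starGraph_adj_zero_left {m : ℕ} {i : Fin (m + 1)} : (starGraph m).Adj 0 i ↔ i ≠ 0 := by
  simp [starGraph]

section attachStar

variable {G : SimpleGraph V} {y : V} {m : ℕ} {a : Fin (m + 1)}

@[simp]
theorem attachStar_adj_inl_inl {u v : V} :
    (attachStar G y m a).Adj (.inl u) (.inl v) ↔ G.Adj u v := by
  simpa [attachStar, map_adj'] using fun h : G.Adj u v => h.ne

@[simp]
theorem attachStar_adj_inr_inr {i j : Fin (m + 1)} :
    (attachStar G y m a).Adj (.inr i) (.inr j) ↔ (starGraph m).Adj i j := by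
  simpa [attachStar, map_adj'] using fun h : (starGraph m).Adj i j => h.ne

@[simp]
theorem attachStar_adj_inr_inl {i : Fin (m + 1)} {v : V} :
    (attachStar G y m a).Adj (.inr i) (.inl v) ↔ i = a ∧ v = y := by
  simp [attachStar, map_adj']

theorem IsDomSet.attachStar_insert_center {D : Set V} (hD : IsDomSet G D) :
    IsDomSet (attachStar G y m a) (insert (.inr 0) (.inl '' D)) := by
  rintro (w | i)
  · obtain ⟨x, hx, hxw⟩ := hD w
    refine ⟨.inl x, Set.mem_insert_of_mem _ (Set.mem_image_of_mem _ hx), ?_⟩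
    rcases hxw with rfl | hxw
    exacts [Or.inl rfl, Or.inr (attachStar_adj_inl_inl.2 hxw)]
  · refine ⟨.inr 0, Set.mem_insert _ _, ?_⟩
    by_cases hi : i = 0
    exacts [Or.inl (congrArg _ hi), Or.inr (attachStar_adj_inr_inr.2 (starGraph_adj_zero_left.2 hi))]

theorem domNum_attachStar_le : domNum (attachStar G y m a) ≤ domNum G + 1 := by
  obtain ⟨D, hD, hDcard⟩ := exists_isDomSet_ncard_eq_domNum G
  calc domNum (attachStar G y m a)
      ≤ (insert (.inr 0) (.inl '' D) : Set (V ⊕ Fin (m + 1))).ncard :=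
        domNum_le_ncard hD.attachStar_insert_center
    _ ≤ (Sum.inl '' D : Set (V ⊕ Fin (m + 1))).ncard + 1 := Set.ncard_insert_le _ _
    _ = domNum G + 1 := by rw [Set.ncard_image_of_injective _ Sum.inl_injective, hDcard]

theorem IsDomSet.exists_inr_mem_ne (hm : 2 ≤ m) (ha : a ≠ 0)
    {D : Set (V ⊕ Fin (m + 1))} (hD : IsDomSet (attachStar G y m a) D) :
    ∃ c ≠ a, .inr c ∈ D := by
  obtain ⟨b, hb0, hba⟩ : ∃ b : Fin (m + 1), b ≠ 0 ∧ b ≠ a :=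
    ENat.exists_ne_ne_of_three_le (by simp; exact_mod_cast Nat.succ_le_succ hm) 0 a
  obtain ⟨x, hx, hxb⟩ := hD (.inr b)
  rcases x with v | c
  · rcases hxb with h | h
    · exact absurd h Sum.inr_ne_inl
    · exact absurd (attachStar_adj_inr_inl.1 h.symm).1 hba
  · rcases hxb with h | h
    · exact ⟨c, Sum.inr_injective h ▸ hba, hx⟩
    · obtain ⟨rfl, -⟩ | ⟨rfl, -⟩ := attachStar_adj_inr_inr.1 h
      exacts [⟨0, ha.symm, hx⟩, absurd rfl hb0]

theorem IsDomSet.image_sumElim_sdiff_inr {D : Set (V ⊕ Fin (m + 1))}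
    (hD : IsDomSet (attachStar G y m a) D) {c : Fin (m + 1)} (hca : c ≠ a) :
    IsDomSet G (Sum.elim id (fun _ => y) '' (D \ {.inr c})) := by
  intro w
  obtain ⟨x, hx, hxw⟩ := hD (.inl w)
  rcases x with v | i
  · refine ⟨v, ⟨.inl v, ⟨hx, Sum.inl_ne_inr⟩, rfl⟩, ?_⟩
    rcases hxw with h | h
    exacts [Or.inl (Sum.inl_injective h), Or.inr (attachStar_adj_inl_inl.1 h)]
  · rcases hxw with h | h
    · exact absurd h Sum.inl_ne_inr
    · obtain ⟨rfl, rfl⟩ := attachStar_adj_inr_inl.1 h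
      exact ⟨w, ⟨.inr i, ⟨hx, fun h => hca (Sum.inr_injective h).symm⟩, rfl⟩, Or.inl rfl⟩

theorem domNum_add_one_le_domNum_attachStar [Finite V] (hm : 2 ≤ m) (ha : a ≠ 0) :
    domNum G + 1 ≤ domNum (attachStar G y m a) := by
  obtain ⟨D, hD, hDcard⟩ := exists_isDomSet_ncard_eq_domNum (attachStar G y m a)
  obtain ⟨c, hca, hcD⟩ := hD.exists_inr_mem_ne hm ha
  calc domNum G + 1
      ≤ (Sum.elim id (fun _ => y) '' (D \ {.inr c})).ncard + 1 :=
        Nat.succ_le_succ (domNum_le_ncard (hD.image_sumElim_sdiff_inr hca))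
    _ ≤ (D \ {.inr c}).ncard + 1 := Nat.succ_le_succ Set.ncard_image_le
    _ = domNum (attachStar G y m a) := by rw [Set.ncard_sdiff_singleton_add_one hcD, hDcard]

end attachStar

theorem domNum_attachStar_general {V : Type u} [Fintype V] (G : SimpleGraph V)
    (m : ℕ) (hm : 2 ≤ m) (y : V) (a : Fin (m + 1)) (ha : a ≠ 0) :
    domNum (attachStar G y m a) = domNum G + 1 :=
  le_antisymm domNum_attachStar_le (domNum_add_one_le_domNum_attachStar hm ha)

/-- attaching a star `K_{1,m}` (`m ≥ 2`) to a tree by an edge from one of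
the star's leaves increases the domination number by exactly one. -/
theorem domNum_attachStar {V : Type u} [Fintype V] (G : SimpleGraph V) (hG : G.IsTree)
    (m : ℕ) (hm : 2 ≤ m) (y : V) (a : Fin (m + 1)) (ha : a ≠ 0) :
    domNum (attachStar G y m a) = domNum G + 1 :=
  domNum_attachStar_general G m hm y a ha

end EternalDom
end
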